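/- Let M = (S, A, X, T, i) be a parametric MDP with induced POMDP M', let p ∈ Dist(X) be a parameter distribution, π_X a pMDP policy of M, and r : Runs_X → ℝ a measurable objective function. Set π' = Φ(π_X) = π_X ∘ f⁻¹, r' = r ∘ f⁻¹, and i'(s,x) = i(s)·p(x). Then E^M_{π_X,i,p}(r) = E^{M'}_{π',i'}(r'). Conversely, given any POMDP policy π' of M', the same equality holds with π_X = Φ⁻¹(π') = π' ∘ f. -/
import Mathlib


open MeasureTheory ENNReal

namespace PMDPEncoding

universe u v w

variable {S : Type u} {A : Type v} {X : Type w}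

/-- An infinite alternating sequence of state-action pairs
(the `k`-th pair consists of the `k`-th state and the `k`-th action of the run). -/
abbrev RunSeq (S : Type u) (A : Type v) := ℕ → S × A

/-- `ρ` is a run of the MDP with transition function `T`:
all transitions have positive probability. -/
def IsRun (T : S → A → PMF S) (ρ : RunSeq S A) : Prop :=
  ∀ k, 0 < T (ρ k).1 (ρ k).2 (ρ (k + 1)).1

/-- A history: a finite list of state-action pairs followed by a final state. -/
abbrev Hist (S : Type u) (A : Type v) := List (S × A) × S

/-- The first state of a history. -/
def Hist.first (h : Hist S A) : S :=
  match h.1 with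
  | [] => h.2
  | p :: _ => p.1

/-- Auxiliary for `IsHist`: validity of the list part of a history with final state `t`. -/
def IsHistL (T : S → A → PMF S) : List (S × A) → S → Prop
  | [], _ => True
  | (s, a) :: rest, t => 0 < T s a (Hist.first (rest, t)) ∧ IsHistL T rest t

/-- `h` is a history (finite prefix of a run) of the MDP with transition function `T`. -/
def IsHist (T : S → A → PMF S) (h : Hist S A) : Prop := IsHistL T h.1 h.2

/-- The set of runs of the MDP with transition function `T`. -/
def Runs (T : S → A → PMF S) := {ρ : RunSeq S A // IsRun T ρ}

/-- The set of (raw) sequences having the history `h` as a prefix. -/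
def ConeSeq (h : Hist S A) : Set (RunSeq S A) :=
  {ρ | (∀ k, (hk : k < h.1.length) → ρ k = h.1[k]'hk) ∧ (ρ h.1.length).1 = h.2}

/-- The cone of a history: the set of runs with prefix `h`. -/
def Cone (T : S → A → PMF S) (h : Hist S A) : Set (Runs T) :=
  {ρ | ρ.1 ∈ ConeSeq h}

/-- The σ-algebra on runs generated by the cones of histories. -/
instance conesAlg (T : S → A → PMF S) : MeasurableSpace (Runs T) :=
  MeasurableSpace.generateFrom {C | ∃ h : Hist S A, IsHist T h ∧ C = Cone T h}

/-- Valid histories of an MDP, as a subtype. -/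
def HistOf (T : S → A → PMF S) := {h : Hist S A // IsHist T h}

/-- Auxiliary function for the probability of a cone:
`pre` is the prefix of the history processed so far. -/
noncomputable def coneProbAux (T : S → A → PMF S) (π : Hist S A → PMF A) :
    List (S × A) → List (S × A) → S → ℝ≥0∞
  | _, [], _ => 1
  | pre, (s, a) :: rest, t =>
      π (pre, s) a * T s a (Hist.first (rest, t)) *
        coneProbAux T π (pre ++ [(s, a)]) rest t

/-- The probability `i(s₀) · ∏_{k<n} π(s₀a₀…s_k)(a_k) · T(s_k,a_k)(s_{k+1})` that the
induced measure of policy `π` and initial distribution `i` assigns to the cone of a history. -/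
noncomputable def coneProb (T : S → A → PMF S) (i : PMF S) (π : Hist S A → PMF A)
    (h : Hist S A) : ℝ≥0∞ :=
  i h.first * coneProbAux T π [] h.1 h.2

/-- The evaluated transition function `T_x` of a pMDP at parameter point `x`. -/
def evalT (T : S → A → X → PMF S) (x : X) : S → A → PMF S := fun s a => T s a x

/-- Runs of a pMDP: pairs `(x, ρ)` of a parameter value `x` and a run `ρ` of `M(x)`. -/
def RunsX (T : S → A → X → PMF S) := {q : X × RunSeq S A // IsRun (evalT T q.1) q.2}

/-- Valid histories of a pMDP: pairs `(x, h)` with `h` a history of `M(x)`. -/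
def HistX (T : S → A → X → PMF S) := {q : X × Hist S A // IsHist (evalT T q.1) q.2}

/-- The generator set `{x} × Cone(h)` of the σ-algebra on the runs of a pMDP. -/
def ConeX (T : S → A → X → PMF S) (x : X) (h : Hist S A) : Set (RunsX T) :=
  {q | q.1.1 = x ∧ q.1.2 ∈ ConeSeq h}

/-- The σ-algebra on the runs of a pMDP generated by the sets `{x} × Cone(h)`. -/
instance conesXAlg (T : S → A → X → PMF S) : MeasurableSpace (RunsX T) :=
  MeasurableSpace.generateFrom
    {C | ∃ (x : X) (h : Hist S A), IsHist (evalT T x) h ∧ C = ConeX T x h}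

/-- The transition function `T'` of the induced POMDP of a pMDP:
`T'((s,x),a)(s',x') = T(s,a)(x)(s') · δ_x(x')`. -/
noncomputable def indT (T : S → A → X → PMF S) : S × X → A → PMF (S × X) :=
  fun sx a => (T sx.1 a sx.2).map fun s' => (s', sx.2)

/-- The observation function of the induced POMDP: `O(s,x) = s`. -/
def obs : S × X → S := Prod.fst

/-- The observation map extended to histories of the induced POMDP. -/
def obsHist : Hist (S × X) A → Hist S A :=
  fun h => (h.1.map fun p => (p.1.1, p.2), h.2.1)

/-- The map `f` on raw sequences: `f(x, s₀·a₀·s₁·⋯) = (s₀,x)·a₀·(s₁,x)·⋯`. -/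
def fSeq (x : X) (ρ : RunSeq S A) : RunSeq (S × X) A :=
  fun k => (((ρ k).1, x), (ρ k).2)

theorem indT_pos {T : S → A → X → PMF S} {s s' : S} {a : A} {x : X}
    (h : 0 < T s a x s') : 0 < indT T (s, x) a (s', x) := by
  have hmem : (s', x) ∈ ((T s a x).map fun u => (u, x)).support := by
    rw [PMF.support_map]
    exact ⟨s', (PMF.mem_support_iff _ _).2 h.ne', rfl⟩
  exact pos_iff_ne_zero.mpr ((PMF.mem_support_iff _ _).1 hmem)

/-- The map `f : Runs_X → Runs'` from the runs of a pMDP to the runs of its induced POMDP. -/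
def fRun (T : S → A → X → PMF S) (q : RunsX T) : Runs (indT T) :=
  ⟨fSeq q.1.1 q.1.2, fun k => indT_pos (q.2 k)⟩

/-- The map `f` on raw histories: `f(x, s₀·a₀·⋯·s_n) = (s₀,x)·a₀·⋯·(s_n,x)`. -/
def fHistSeq (x : X) (h : Hist S A) : Hist (S × X) A :=
  (h.1.map fun p => ((p.1, x), p.2), (h.2, x))

theorem isHist_fHistSeq (T : S → A → X → PMF S) (x : X) :
    ∀ (l : List (S × A)) (t : S), IsHist (evalT T x) (l, t) →
      IsHist (indT T) (fHistSeq x (l, t))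
  | [], _, _ => trivial
  | (s, a) :: rest, t, hv => by
      obtain ⟨h1, h2⟩ := hv
      have hrec := isHist_fHistSeq T x rest t h2
      refine ⟨?_, hrec⟩
      show 0 < indT T (s, x) a (Hist.first ((rest.map fun p => ((p.1, x), p.2)), (t, x)))
      have hfirst : Hist.first ((rest.map fun p => ((p.1, x), p.2) : List ((S × X) × A)), (t, x)) =
          (Hist.first (rest, t), x) := by
        cases rest <;> rfl
      rw [hfirst]
      exact indT_pos h1

/-- The map `f : Hist_X → Hist'` from the histories of a pMDP to the histories of
its induced POMDP. -/
def fHistX (T : S → A → X → PMF S) (q : HistX T) : HistOf (indT T) :=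
  ⟨fHistSeq q.1.1 q.1.2, isHist_fHistSeq T q.1.1 q.1.2.1 q.1.2.2 q.2⟩

/-- Some run of an MDP: start anywhere, always pick a fixed action, and follow the
support of the transition distributions. -/
noncomputable def someRunSeq (T : S → A → PMF S) (sa : S × A) (a : A) : RunSeq S A :=
  fun k => Nat.rec sa (fun _ ih => ((PMF.support_nonempty (T ih.1 ih.2)).some, a)) k

theorem someRunSeq_isRun (T : S → A → PMF S) (sa : S × A) (a : A) :
    IsRun T (someRunSeq T sa a) := by
  intro k
  exact pos_iff_ne_zero.mpr <| (PMF.mem_support_iff _ _).1 <|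
    (PMF.support_nonempty (T (someRunSeq T sa a k).1 (someRunSeq T sa a k).2)).some_mem

instance instNonemptyRuns [Nonempty S] [Nonempty A] (T : S → A → PMF S) :
    Nonempty (Runs T) :=
  ⟨⟨someRunSeq T (Classical.arbitrary S, Classical.arbitrary A) (Classical.arbitrary A),
    someRunSeq_isRun _ _ _⟩⟩

instance instNonemptyRunsX [Nonempty S] [Nonempty A] [Nonempty X] (T : S → A → X → PMF S) :
    Nonempty (RunsX T) :=
  ⟨⟨(Classical.arbitrary X,
      someRunSeq (evalT T (Classical.arbitrary X))
        (Classical.arbitrary S, Classical.arbitrary A) (Classical.arbitrary A)),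
    someRunSeq_isRun _ _ _⟩⟩

instance instNonemptyHistX [Nonempty S] [Nonempty X] (T : S → A → X → PMF S) :
    Nonempty (HistX T) :=
  ⟨⟨(Classical.arbitrary X, ([], Classical.arbitrary S)), trivial⟩⟩

instance instNonemptyHistOf [Nonempty S] (T : S → A → PMF S) :
    Nonempty (HistOf T) :=
  ⟨⟨([], Classical.arbitrary S), trivial⟩⟩


theorem indT_apply (T : S → A → X → PMF S) (s s' : S) (a : A) (x : X) :
    indT T (s, x) a (s', x) = T s a x s' := by
  rw [indT, PMF.map_apply]
  rw [tsum_eq_single s' (by intro u hu; simp [Prod.ext_iff, Ne.symm hu])]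
  simp

theorem first_append (l l' : List (S × A)) (t : S) :
    Hist.first (l ++ l', t) = Hist.first (l, Hist.first (l', t)) := by
  cases l <;> rfl

theorem first_map (x : X) (l : List (S × A)) (t : S) :
    Hist.first (l.map fun p => ((p.1, x), p.2), (t, x)) = (Hist.first (l, t), x) := by
  cases l <;> rfl

theorem isHistL_prefix (T : S → A → PMF S) :
    ∀ (pre l : List (S × A)) (t : S), IsHistL T (pre ++ l) t →
      IsHistL T pre (Hist.first (l, t))
  | [], _, _, _ => trivial
  | (s, a) :: rest, l, t, h => by
    obtain ⟨h1, h2⟩ := h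
    refine ⟨?_, isHistL_prefix T rest l t h2⟩
    have h1' : 0 < T s a (Hist.first (rest ++ l, t)) := h1
    rwa [first_append] at h1'

theorem coneProbAux_fHist (T : S → A → X → PMF S) (x : X)
    (πX : X × Hist S A → PMF A) (π' : Hist (S × X) A → PMF A)
    (hPhi : ∀ (h : Hist S A), IsHist (evalT T x) h → π' (fHistSeq x h) = πX (x, h)) :
    ∀ (l pre : List (S × A)) (t : S), IsHistL (evalT T x) (pre ++ l) t →
      coneProbAux (indT T) π' (pre.map fun p => ((p.1, x), p.2))
          (l.map fun p => ((p.1, x), p.2)) (t, x)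
        = coneProbAux (evalT T x) (fun h => πX (x, h)) pre l t
  | [], _, _, _ => rfl
  | (s, a) :: rest, pre, t, hv => by
    have hpre : IsHist (evalT T x) (pre, s) :=
      isHistL_prefix (evalT T x) pre ((s, a) :: rest) t hv
    have hπ : π' (pre.map fun p => ((p.1, x), p.2), (s, x)) = πX (x, (pre, s)) :=
      hPhi (pre, s) hpre
    have hrec := coneProbAux_fHist T x πX π' hPhi rest (pre ++ [(s, a)]) t
      (by rw [List.append_assoc]; exact hv)
    simp only [List.map_append, List.map_cons, List.map_nil] at hrec
    simp only [List.map_cons, coneProbAux]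
    rw [first_map, indT_apply, hπ, hrec]
    rfl

theorem coneProb_fHist (T : S → A → X → PMF S) (x : X) (i : PMF S) (p : PMF X)
    (πX : X × Hist S A → PMF A) (π' : Hist (S × X) A → PMF A)
    (hPhi : ∀ (h : Hist S A), IsHist (evalT T x) h → π' (fHistSeq x h) = πX (x, h))
    (i' : PMF (S × X)) (hi' : ∀ s x, i' (s, x) = i s * p x)
    (h : Hist S A) (hh : IsHist (evalT T x) h) :
    coneProb (indT T) i' π' (fHistSeq x h) =
      p x * coneProb (evalT T x) i (fun h => πX (x, h)) h := by
  obtain ⟨l, t⟩ := h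
  rw [coneProb, coneProb]
  have h1 : (fHistSeq x (l, t)).first = (Hist.first (l, t), x) := first_map x l t
  rw [h1, hi']
  have h2 := coneProbAux_fHist T x πX π' hPhi l [] t hh
  simp only [List.map_nil] at h2
  rw [show (fHistSeq x (l, t)).1 = l.map (fun p => ((p.1, x), p.2)) from rfl,
    show (fHistSeq x (l, t)).2 = (t, x) from rfl, h2]
  ring

theorem fRun_injective (T : S → A → X → PMF S) : Function.Injective (fRun T) := by
  rintro ⟨⟨x, ρ⟩, hq⟩ ⟨⟨y, σ⟩, hq'⟩ h
  have h' : fSeq x ρ = fSeq y σ := congrArg Subtype.val h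
  have hx : x = y := congrArg (fun f => (f 0).1.2) h'
  subst hx
  have hρ : ρ = σ := by
    funext k
    have h1 : (ρ k).1 = (σ k).1 := congrArg (fun f => (f k).1.1) h'
    have h2 : (ρ k).2 = (σ k).2 := congrArg (fun f => (f k).2) h'
    exact Prod.ext h1 h2
  subst hρ; rfl

theorem fRun_surjective (T : S → A → X → PMF S) : Function.Surjective (fRun T) := by
  rintro ⟨ρ', hρ'⟩
  have hconst : ∀ k, (ρ' k).1.2 = (ρ' 0).1.2 := by
    intro k
    induction k with
    | zero => rfl
    | succ n ih =>
      have hpos := hρ' n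
      have hmem := (PMF.mem_support_iff _ _).2 hpos.ne'
      rw [indT, PMF.support_map] at hmem
      obtain ⟨u, _, hu⟩ := hmem
      have h2 : (ρ' (n + 1)).1.2 = (ρ' n).1.2 := (congrArg Prod.snd hu).symm
      rw [h2, ih]
  set x := (ρ' 0).1.2 with hxdef
  have he : ∀ k, (ρ' k).1 = ((ρ' k).1.1, x) := fun k => Prod.ext rfl (hconst k)
  have hrun : IsRun (evalT T x) (fun k => ((ρ' k).1.1, (ρ' k).2)) := by
    intro k
    have hpos := hρ' k
    rw [he k, he (k + 1)] at hpos
    rw [indT_apply] at hpos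
    exact hpos
  refine ⟨⟨(x, fun k => ((ρ' k).1.1, (ρ' k).2)), hrun⟩, ?_⟩
  refine Subtype.ext (funext fun k => ?_)
  show (((ρ' k).1.1, x), (ρ' k).2) = ρ' k
  rw [← hconst k]

theorem fRun_image_coneX (T : S → A → X → PMF S) (x : X) (h : Hist S A) :
    fRun T '' ConeX T x h = Cone (indT T) (fHistSeq x h) := by
  ext ρ'
  constructor
  · rintro ⟨q, ⟨hy, hc1, hc2⟩, rfl⟩
    subst hy
    refine ⟨fun k hk => ?_, ?_⟩
    · have hk' : k < h.1.length := by simpa [fHistSeq] using hk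
      have := hc1 k hk'
      simp only [fRun, fSeq, fHistSeq, List.getElem_map, this]
    · have : (q.1.2 h.1.length).1 = h.2 := hc2
      show ((fRun T q).1 (fHistSeq q.1.1 h).1.length).1 = (h.2, q.1.1)
      simp only [fRun, fSeq, fHistSeq, List.length_map, this]
  · intro hmem
    obtain ⟨q, rfl⟩ := fRun_surjective T ρ'
    obtain ⟨hc1, hc2⟩ := hmem
    have hx : q.1.1 = x := by
      have := congrArg Prod.snd hc2
      simpa [fRun, fSeq, fHistSeq, List.length_map] using this
    refine ⟨q, ⟨hx, fun k hk => ?_, ?_⟩, rfl⟩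
    · have := hc1 k (by simpa [fHistSeq] using hk)
      simp only [fRun, fSeq, fHistSeq, List.getElem_map, Prod.ext_iff] at this
      exact Prod.ext this.1.1 this.2
    · have := congrArg Prod.fst hc2
      simpa [fRun, fSeq, fHistSeq, List.length_map] using this

theorem coneSeq_subset {h h' : Hist S A} (hle : h.1.length ≤ h'.1.length)
    {ρ : RunSeq S A} (hρ : ρ ∈ ConeSeq h) (hρ' : ρ ∈ ConeSeq h') :
    ConeSeq h' ⊆ ConeSeq h := by
  rintro σ ⟨hσ1, hσ2⟩
  obtain ⟨hρ1, hρ2⟩ := hρ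
  obtain ⟨hρ'1, hρ'2⟩ := hρ'
  refine ⟨fun k hk => ?_, ?_⟩
  · rw [hσ1 k (lt_of_lt_of_le hk hle), ← hρ'1 k (lt_of_lt_of_le hk hle), hρ1 k hk]
  · rcases lt_or_eq_of_le hle with hlt | heq
    · rw [hσ1 _ hlt, ← hρ'1 _ hlt]
      exact hρ2
    · rw [heq, hσ2, ← hρ'2, ← heq]
      exact hρ2

theorem isPiSystem_conesX (T : S → A → X → PMF S) :
    IsPiSystem {C | ∃ (x : X) (h : Hist S A), IsHist (evalT T x) h ∧ C = ConeX T x h} := by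
  rintro C1 ⟨x, h, hh, rfl⟩ C2 ⟨y, h', hh', rfl⟩ hne
  obtain ⟨q, ⟨hq1, hq2⟩, ⟨hq1', hq2'⟩⟩ := hne
  subst hq1; subst hq1'
  rcases le_total h.1.length h'.1.length with hle | hle
  · have hsub : ConeX T q.1.1 h' ⊆ ConeX T q.1.1 h := by
      rintro w ⟨hw1, hw2⟩
      exact ⟨hw1, coneSeq_subset hle hq2 hq2' hw2⟩
    exact ⟨q.1.1, h', hh', Set.inter_eq_right.mpr hsub⟩
  · have hsub : ConeX T q.1.1 h ⊆ ConeX T q.1.1 h' := by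
      rintro w ⟨hw1, hw2⟩
      exact ⟨hw1, coneSeq_subset hle hq2' hq2 hw2⟩
    exact ⟨q.1.1, h, hh, Set.inter_eq_left.mpr hsub⟩

theorem measurable_invFRun [Nonempty S] [Nonempty A] [Nonempty X] (T : S → A → X → PMF S) :
    Measurable (Function.invFun (fRun T)) := by
  apply measurable_generateFrom
  rintro C ⟨x, h, hh, rfl⟩
  rw [← Set.image_eq_preimage_of_inverse (Function.leftInverse_invFun (fRun_injective T))
      (Function.rightInverse_invFun (fRun_surjective T)), fRun_image_coneX]
  exact MeasurableSpace.measurableSet_generateFrom ⟨fHistSeq x h, isHist_fHistSeq T x h.1 h.2 hh, rfl⟩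

/-- Let `p ∈ Dist(X)`, `π_X` a pMDP policy of `M`, and
`r : Runs_X → ℝ` a measurable objective function.  Set `π' = Φ(π_X) = π_X ∘ f⁻¹`,
`r' = r ∘ f⁻¹`, and `i'(s,x) = i(s)·p(x)`.  Then `E^M_{π_X,i,p}(r) = E^{M'}_{π',i'}(r')`.
Conversely, for any POMDP policy `π'` of `M'` the same equality holds with
`π_X = Φ⁻¹(π') = π' ∘ f` (i.e., whenever `π_X` and `π'` are related by `π' ∘ f = π_X`). -/
theorem expectation_correspondence [Nonempty S] [Nonempty A] [Nonempty X]
    (T : S → A → X → PMF S) (i : PMF S) (p : PMF X)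
    (πX : X × Hist S A → PMF A)
    (hind : ∀ (x y : X) (h : Hist S A), IsHist (evalT T x) h → IsHist (evalT T y) h →
      πX (x, h) = πX (y, h))
    (π' : Hist (S × X) A → PMF A)
    (hobs : ∀ h1 h2 : Hist (S × X) A, IsHist (indT T) h1 → IsHist (indT T) h2 →
      obsHist h1 = obsHist h2 → π' h1 = π' h2)
    (hPhi : ∀ (x : X) (h : Hist S A), IsHist (evalT T x) h → π' (fHistSeq x h) = πX (x, h))
    (i' : PMF (S × X)) (hi' : ∀ s x, i' (s, x) = i s * p x)
    (Px : ∀ x : X, Measure (Runs (evalT T x)))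
    (hPxProb : ∀ x, IsProbabilityMeasure (Px x))
    (hPx : ∀ (x : X) (h : Hist S A), IsHist (evalT T x) h →
      Px x (Cone (evalT T x) h) = coneProb (evalT T x) i (fun h => πX (x, h)) h)
    (μ : Measure (RunsX T)) [IsProbabilityMeasure μ]
    (hμ : ∀ (x : X) (h : Hist S A), IsHist (evalT T x) h →
      μ (ConeX T x h) = p x * Px x (Cone (evalT T x) h))
    (P' : Measure (Runs (indT T))) [IsProbabilityMeasure P']
    (hP' : ∀ h' : Hist (S × X) A, IsHist (indT T) h' →
      P' (Cone (indT T) h') = coneProb (indT T) i' π' h')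
    (r : RunsX T → ℝ) (hr : Measurable r) :
    ∫ q, r q ∂μ = ∫ ρ, r (Function.invFun (fRun T) ρ) ∂P' := by
  classical
  have hgm : Measurable (Function.invFun (fRun T)) := measurable_invFRun T
  have hprob : IsProbabilityMeasure (P'.map (Function.invFun (fRun T))) :=
    Measure.isProbabilityMeasure_map hgm.aemeasurable
  have hmap : P'.map (Function.invFun (fRun T)) = μ := by
    refine MeasureTheory.ext_of_generate_finite _ rfl (isPiSystem_conesX T) ?_ ?_
    · rintro C ⟨x, h, hh, rfl⟩
      rw [Measure.map_apply hgm (MeasurableSpace.measurableSet_generateFrom ⟨x, h, hh, rfl⟩)]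
      rw [← Set.image_eq_preimage_of_inverse (Function.leftInverse_invFun (fRun_injective T))
          (Function.rightInverse_invFun (fRun_surjective T)), fRun_image_coneX]
      rw [hP' _ (isHist_fHistSeq T x h.1 h.2 hh), hμ x h hh, hPx x h hh]
      exact coneProb_fHist T x i p πX π' (fun h hh => hPhi x h hh) i' hi' h hh
    · rw [measure_univ, measure_univ]
  rw [← hmap, integral_map hgm.aemeasurable hr.aestronglyMeasurable]


end PMDPEncoding
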